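/- Let d ≥ 2 be an even integer and Θ a d-small symbol with bipartition λ¹.λ² and charge (σ₁,σ₂). For each j ∈ {1,2} and each residue class i modulo d, there is at most one box of λ^j that is addable or removable and whose charged content (with respect to t = (σ₁, σ₂ + d/2)) is congruent to i modulo d. Consequently, for each i the bipartition λ¹.λ² has at most two addable-or-removable boxes of charged content ≡ i (mod d) in total, at most one in each component. -/

import Mathlib

open scoped Classical

/-- A β-set: a set of integers containing all sufficiently small integers
and no sufficiently large ones. -/
def IsBetaSet (X : Set ℤ) : Prop :=
  (∃ c : ℤ, ∀ z : ℤ, z < c → z ∈ X) ∧ (∃ C : ℤ, ∀ z : ℤ, C ≤ z → z ∉ X)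

/-- `topB X = max X`. -/
noncomputable def topB (X : Set ℤ) : ℤ := sSup X

/-- `botB X = max {z | every integer < z lies in X}`. -/
noncomputable def botB (X : Set ℤ) : ℤ := sSup {z : ℤ | ∀ w : ℤ, w < z → w ∈ X}

/-- The charge `s(X)` of a β-set `X`, computed with the cutoff `c = botB X`. -/
noncomputable def chargeB (X : Set ℤ) : ℤ :=
  ((X ∩ Set.Ici (botB X)).ncard : ℤ) + botB X - 1

/-- `elemSeq X j` is the `(j+1)`-st largest element of the β-set `X`. -/
noncomputable def elemSeq (X : Set ℤ) : ℕ → ℤ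
  | 0 => sSup X
  | n + 1 => sSup (X ∩ Set.Iio (elemSeq X n))

/-- The partition `λ(X)` of a β-set `X`, `0`-indexed: `partB X j = λ_{j+1}`,
recovered from `x_j = s(X) + λ_j - j + 1` where `x_j` is the `j`-th largest element. -/
noncomputable def partB (X : Set ℤ) (j : ℕ) : ℕ :=
  (elemSeq X j - chargeB X + j).toNat

/-- The size `|λ(X)|` of the partition of a β-set `X`. -/
noncomputable def sizeB (X : Set ℤ) : ℕ := ∑ᶠ j : ℕ, partB X j

/-- A partition, encoded as a weakly decreasing eventually zero function (0-indexed). -/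
def IsPartition (μ : ℕ → ℕ) : Prop :=
  (∀ j, μ (j + 1) ≤ μ j) ∧ ∃ N, ∀ j, N ≤ j → μ j = 0

/-- The β-set `{s + λ_j - j + 1 : j ≥ 1}` of the partition `μ` with charge `s`. -/
def betaOf (μ : ℕ → ℕ) (s : ℤ) : Set ℤ :=
  {x : ℤ | ∃ j : ℕ, x = s + (μ j : ℤ) - (j : ℤ)}

/-- The symbol `Θ = (X₁, X₂)` is `d`-small with defining intervals
`I₁ = [a₁,b₁]` and `I₂ = [a₂,b₂]`. -/
structure IsDSmallWith (d : ℤ) (X₁ X₂ : Set ℤ) (a₁ b₁ a₂ b₂ : ℤ) : Prop where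
  len₁ : b₁ - a₁ = d / 2 - 1
  len₂ : b₂ - a₂ = d / 2 - 1
  bot₁ : a₁ ≤ botB X₁
  bot₂ : a₂ ≤ botB X₂
  top₁ : topB X₁ ≤ b₁
  top₂ : topB X₂ ≤ b₂
  cong : d ∣ b₂ - (b₁ + d / 2)

/-- The symbol `Θ = (X₁, X₂)` is `d`-small: it admits some pair of defining intervals. -/
def IsDSmall (d : ℤ) (X₁ X₂ : Set ℤ) : Prop :=
  ∃ a₁ b₁ a₂ b₂ : ℤ, IsDSmallWith d X₁ X₂ a₁ b₁ a₂ b₂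

/-- The row (`1` or `2`) containing the right region. -/
def rightRow (b₁ b₂ : ℤ) : ℕ := if b₁ < b₂ then 2 else 1

/-- The row, as a β-set, containing the right region. -/
def rightSet (X₁ X₂ : Set ℤ) (b₁ b₂ : ℤ) : Set ℤ := if b₁ < b₂ then X₂ else X₁

/-- The row, as a β-set, containing the left region. -/
def leftSet (X₁ X₂ : Set ℤ) (b₁ b₂ : ℤ) : Set ℤ := if b₁ < b₂ then X₁ else X₂

/-- The cardinality `kd` of the middle region. -/
def middleLen (d b₁ b₂ : ℤ) : ℤ := |b₂ - b₁| - d / 2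

/-- The alphabet `{∧, ∨, ×, ∘}` of up-down diagrams: `up = ∧`, `dn = ∨`,
`cross = ×`, `circ = ∘`. -/
inductive UD : Type
  | up
  | dn
  | cross
  | circ
deriving DecidableEq

/-- The up-down diagram `w_ud(Θ)` of a `d`-small symbol with defining intervals:
`wud d X₁ X₂ b₁ b₂ i` is the letter `w_i` for `1 ≤ i ≤ d/2`.  Here the right
region is `[m+1, m+d/2]` with `m = max b₁ b₂ - d/2`, `β_i = m + i`, and
`β_i - kd - d/2 = β_i - |b₂ - b₁|`. -/
noncomputable def wud (d : ℤ) (X₁ X₂ : Set ℤ) (b₁ b₂ : ℤ) (i : ℤ) : UD :=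
  if (max b₁ b₂ - d / 2 + i) ∈ rightSet X₁ X₂ b₁ b₂ then
    if (max b₁ b₂ - d / 2 + i) - |b₂ - b₁| ∈ leftSet X₁ X₂ b₁ b₂ then UD.cross else UD.up
  else
    if (max b₁ b₂ - d / 2 + i) - |b₂ - b₁| ∈ leftSet X₁ X₂ b₁ b₂ then UD.dn else UD.circ

/-- Removing an `e`-cohook in row `1` (the rows get interchanged afterwards). -/
def RemoveCohookRow1 (e : ℤ) (Θ Θ' : Set ℤ × Set ℤ) : Prop :=
  ∃ x : ℤ, x ∈ Θ.1 ∧ x - e ∉ Θ.2 ∧ Θ' = (Θ.2 ∪ {x - e}, Θ.1 \ {x})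

/-- Removing an `e`-cohook in row `2` (the rows get interchanged afterwards). -/
def RemoveCohookRow2 (e : ℤ) (Θ Θ' : Set ℤ × Set ℤ) : Prop :=
  ∃ x : ℤ, x ∈ Θ.2 ∧ x - e ∉ Θ.1 ∧ Θ' = (Θ.2 \ {x}, Θ.1 ∪ {x - e})

/-- Removing an `e`-cohook. -/
def RemoveCohook (e : ℤ) (Θ Θ' : Set ℤ × Set ℤ) : Prop :=
  RemoveCohookRow1 e Θ Θ' ∨ RemoveCohookRow2 e Θ Θ'

/-- The symbol `Θ` has an `e`-cohook. -/
def HasCohook (e : ℤ) (Θ : Set ℤ × Set ℤ) : Prop :=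
  (∃ x : ℤ, x ∈ Θ.1 ∧ x - e ∉ Θ.2) ∨ (∃ x : ℤ, x ∈ Θ.2 ∧ x - e ∉ Θ.1)

/-- `C` is an `e`-cocore of `Θ`: a symbol with no `e`-cohooks obtained from `Θ`
by a finite sequence of `e`-cohook removals. -/
def IsCocoreOf (e : ℤ) (Θ C : Set ℤ × Set ℤ) : Prop :=
  Relation.ReflTransGen (RemoveCohook e) Θ C ∧ ¬ HasCohook e C

/-- The `n`-fold composition of a relation. -/
def RelPow {α : Type*} (R : α → α → Prop) : ℕ → α → α → Prop
  | 0 => Eq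
  | n + 1 => fun a c => ∃ b, R a b ∧ RelPow R n b c

/-- `(a, b)` (row `a`, column `b`, both `1`-indexed) is a box of the partition `μ`
(`μ` is `0`-indexed, so `μ (a-1)` is the `a`-th part `λ_a`). -/
def IsBox (μ : ℕ → ℕ) (a b : ℕ) : Prop := 1 ≤ a ∧ 1 ≤ b ∧ b ≤ μ (a - 1)

/-- `(a, b)` is an addable box of `μ`: adjoining it yields a partition. -/
def IsAddableBox (μ : ℕ → ℕ) (a b : ℕ) : Prop :=
  1 ≤ a ∧ b = μ (a - 1) + 1 ∧ (a = 1 ∨ b ≤ μ (a - 2))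

/-- `(a, b)` is a removable box of `μ`: deleting it yields a partition. -/
def IsRemovableBox (μ : ℕ → ℕ) (a b : ℕ) : Prop :=
  1 ≤ a ∧ b = μ (a - 1) ∧ 1 ≤ b ∧ μ a < b

/-- The charged content `t + b - a` of the box in row `a` and column `b`,
with respect to the charge `t`. -/
def chCont (t : ℤ) (a b : ℕ) : ℤ := t + (b : ℤ) - (a : ℤ)

/-- Selecting the component `j ∈ {1, 2}` of a bipartition. -/
def compPart (μ₁ μ₂ : ℕ → ℕ) (j : ℕ) : ℕ → ℕ := if j = 1 then μ₁ else μ₂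

/-- Selecting the component `j ∈ {1, 2}` of a pair of charges. -/
def compT (t₁ t₂ : ℤ) (j : ℕ) : ℤ := if j = 1 then t₁ else t₂

/-- The box `(a, b)` in component `j` is a good removable `i`-box of the
bipartition `(μ₁, μ₂)` with charges `(t₁, t₂)`, where `r` is the row containing
the right region: it is a removable box of charged content `≡ i (mod d)` and
there is no addable box `A` of either component with charged content `≡ i (mod d)`
such that either `A` has strictly larger charged content, or `A` has equal
charged content and lies in component `r`. -/
def IsGoodRemovableBox (d : ℤ) (μ₁ μ₂ : ℕ → ℕ) (t₁ t₂ : ℤ) (r : ℕ) (i : ℤ)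
    (j a b : ℕ) : Prop :=
  (j = 1 ∨ j = 2) ∧ IsRemovableBox (compPart μ₁ μ₂ j) a b ∧
    d ∣ chCont (compT t₁ t₂ j) a b - i ∧
    ∀ j' a' b' : ℕ, (j' = 1 ∨ j' = 2) → IsAddableBox (compPart μ₁ μ₂ j') a' b' →
      d ∣ chCont (compT t₁ t₂ j') a' b' - i →
      ¬ (chCont (compT t₁ t₂ j) a b < chCont (compT t₁ t₂ j') a' b' ∨
        (chCont (compT t₁ t₂ j') a' b' = chCont (compT t₁ t₂ j) a b ∧ j' = r))

/-- The position of a letter in the order `× < ∧ < ∨ < ∘`. -/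
def udIdx : UD → ℕ
  | UD.cross => 0
  | UD.up => 1
  | UD.dn => 2
  | UD.circ => 3

/-- The word `w₁ ⋯ w_{d/2}` reads `×^α ∧^w ∨^h ∘^β`: all `×`'s first, then all
`∧`'s, then all `∨`'s, then all `∘`'s. -/
def SortedUD (d : ℤ) (w : ℤ → UD) : Prop :=
  ∀ i j : ℤ, 1 ≤ i → i ≤ j → j ≤ d / 2 → udIdx (w i) ≤ udIdx (w j)

/-- The number of occurrences of the letter `u` in the word `w₁ ⋯ w_{d/2}`. -/
noncomputable def countUD (d : ℤ) (w : ℤ → UD) (u : UD) : ℕ :=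
  ((Finset.Icc (1 : ℤ) (d / 2)).filter fun i => w i = u).card

/-- `w'` is obtained from `w` by permuting the letters `∧` and `∨` among the
positions carrying `∧` or `∨`, leaving every `×` and `∘` in place. -/
def PermUpDn (d : ℤ) (w w' : ℤ → UD) : Prop :=
  (∀ i : ℤ, 1 ≤ i → i ≤ d / 2 →
    ((w' i = UD.cross ↔ w i = UD.cross) ∧ (w' i = UD.circ ↔ w i = UD.circ))) ∧
  countUD d w' UD.up = countUD d w UD.up

/-- Replace every letter `∧` by `∨`, leaving the other letters unchanged. -/
def replaceUp : UD → UD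
  | UD.up => UD.dn
  | u => u

/-! An addable box of `λ(X)` with charged content `x` (charge `s(X)`) corresponds to a
position `x ∈ X` with `x + 1 ∉ X`, a removable one to `x ∉ X` with `x + 1 ∈ X`; in both
cases the box is recovered from `x`, and `x` lies in `[bot X - 1, top X]`. For a `d`-small
symbol this window has `d/2 + 1` elements, so two charged contents of addable-or-removable
boxes of one component that are congruent modulo `d` are equal. -/

lemma Int.eq_zero_of_dvd_of_abs_le_ediv_two {d n : ℤ} (hdn : d ∣ n) (hn : |n| ≤ d / 2) :
    n = 0 := by
  rcases lt_trichotomy d 0 with hd | rfl | hd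
  · exact absurd (abs_nonneg n) (by omega)
  · exact zero_dvd_iff.mp hdn
  · exact Int.eq_zero_of_abs_lt_dvd hdn (by omega)

namespace IsBetaSet

variable {X : Set ℤ}

lemma bddAbove (hX : IsBetaSet X) : BddAbove X := by
  obtain ⟨C, hC⟩ := hX.2
  exact ⟨C, fun y hy => (not_le.mp fun h => hC y h hy).le⟩

lemma le_topB (hX : IsBetaSet X) {y : ℤ} (hy : y ∈ X) : y ≤ topB X :=
  le_csSup hX.bddAbove hy

lemma mem_of_lt_botB (hX : IsBetaSet X) {y : ℤ} (hy : y < botB X) : y ∈ X := by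
  obtain ⟨c, hc⟩ := hX.1
  obtain ⟨C, hC⟩ := hX.2
  have hbdd : BddAbove {z : ℤ | ∀ w : ℤ, w < z → w ∈ X} :=
    ⟨C, fun z hz => not_lt.mp fun h => hC C le_rfl (hz C h)⟩
  have hne : ({z : ℤ | ∀ w : ℤ, w < z → w ∈ X}).Nonempty := ⟨c, hc⟩
  exact Int.csSup_mem hne hbdd y hy

lemma botB_le_of_notMem (hX : IsBetaSet X) {y : ℤ} (hy : y ∉ X) : botB X ≤ y :=
  not_lt.mp fun h => hy (hX.mem_of_lt_botB h)

lemma elemSeq_succ_mem (hX : IsBetaSet X) (n : ℕ) :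
    elemSeq X (n + 1) ∈ X ∩ Set.Iio (elemSeq X n) := by
  refine Int.csSup_mem ⟨min (elemSeq X n) (botB X) - 1, hX.mem_of_lt_botB ?_, ?_⟩
    (hX.bddAbove.mono Set.inter_subset_left)
  · have := min_le_right (elemSeq X n) (botB X); omega
  · have := min_le_left (elemSeq X n) (botB X); simp only [Set.mem_Iio]; omega

lemma elemSeq_mem (hX : IsBetaSet X) : ∀ n, elemSeq X n ∈ X
  | 0 => Int.csSup_mem ⟨botB X - 1, hX.mem_of_lt_botB (sub_one_lt _)⟩ hX.bddAbove
  | n + 1 => (hX.elemSeq_succ_mem n).1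

lemma strictAnti_elemSeq (hX : IsBetaSet X) : StrictAnti (elemSeq X) :=
  strictAnti_nat_of_succ_lt fun n => (hX.elemSeq_succ_mem n).2

lemma le_elemSeq_succ (hX : IsBetaSet X) {y : ℤ} {n : ℕ} (hy : y ∈ X)
    (h : y < elemSeq X n) : y ≤ elemSeq X (n + 1) :=
  le_csSup (hX.bddAbove.mono Set.inter_subset_left) ⟨hy, h⟩

lemma exists_lt_elemSeq_eq (hX : IsBetaSet X) (k : ℕ) {y : ℤ} (hy : y ∈ X)
    (h : elemSeq X k < y) : ∃ i < k, elemSeq X i = y := by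
  induction k with
  | zero => exact absurd (hX.le_topB hy) (not_le.mpr h)
  | succ k ih =>
    rcases lt_trichotomy y (elemSeq X k) with hlt | heq | hgt
    · exact absurd (hX.le_elemSeq_succ hy hlt) (not_le.mpr h)
    · exact ⟨k, k.lt_succ_self, heq.symm⟩
    · obtain ⟨i, hi, rfl⟩ := ih hgt
      exact ⟨i, hi.trans k.lt_succ_self, rfl⟩

/-- Above `bot X` the set `X` consists of the `k` largest elements together with a part
of `[bot X, x_k]`. -/
lemma chargeB_le_elemSeq_add_of_botB_le (hX : IsBetaSet X) {k : ℕ}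
    (h : botB X - 1 ≤ elemSeq X k) : chargeB X ≤ elemSeq X k + k := by
  set B := botB X
  set e := elemSeq X k
  have hsub : X ∩ Set.Ici B ⊆ elemSeq X '' Set.Iio k ∪ Set.Icc B e := by
    rintro y ⟨hyX, hyB⟩
    by_cases hy : y ≤ e
    · exact Or.inr ⟨hyB, hy⟩
    · obtain ⟨i, hi, rfl⟩ := hX.exists_lt_elemSeq_eq k hyX (not_le.mp hy)
      exact Or.inl ⟨i, hi, rfl⟩
  have himage : (elemSeq X '' Set.Iio k).ncard ≤ k := by
    simpa [← Finset.coe_Iio, Set.ncard_coe_finset] using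
      Set.ncard_image_le (f := elemSeq X) (Set.finite_Iio k)
  have hIcc : (Set.Icc B e).ncard = (e + 1 - B).toNat := by
    rw [← Finset.coe_Icc, Set.ncard_coe_finset, Int.card_Icc]
  have hcard : (X ∩ Set.Ici B).ncard ≤ k + (e + 1 - B).toNat :=
    calc (X ∩ Set.Ici B).ncard
        ≤ (elemSeq X '' Set.Iio k ∪ Set.Icc B e).ncard :=
          Set.ncard_le_ncard hsub (((Set.finite_Iio k).image _).union (Set.finite_Icc _ _))
      _ ≤ (elemSeq X '' Set.Iio k).ncard + (Set.Icc B e).ncard := Set.ncard_union_le _ _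
      _ ≤ k + (e + 1 - B).toNat := by omega
  have hcharge : chargeB X = ((X ∩ Set.Ici B).ncard : ℤ) + B - 1 := rfl
  omega

lemma chargeB_le_elemSeq_add (hX : IsBetaSet X) (k : ℕ) : chargeB X ≤ elemSeq X k + k := by
  induction k with
  | zero =>
    exact hX.chargeB_le_elemSeq_add_of_botB_le
      (hX.le_topB (hX.mem_of_lt_botB (sub_one_lt _)))
  | succ k ih =>
    by_cases hmem : elemSeq X k - 1 ∈ X
    · have := hX.le_elemSeq_succ hmem (sub_one_lt _)
      have := (hX.elemSeq_succ_mem k).2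
      simp only [Set.mem_Iio] at this
      push_cast
      omega
    · have hB := hX.botB_le_of_notMem hmem
      exact hX.chargeB_le_elemSeq_add_of_botB_le
        (hX.le_elemSeq_succ (hX.mem_of_lt_botB (sub_one_lt _)) (by omega))

lemma partB_cast (hX : IsBetaSet X) (j : ℕ) :
    (partB X j : ℤ) = elemSeq X j - chargeB X + j := by
  have := hX.chargeB_le_elemSeq_add j
  unfold partB
  omega

lemma chCont_addableBox (hX : IsBetaSet X) {a b : ℕ} (h : IsAddableBox (partB X) a b) :
    chCont (chargeB X) a b = elemSeq X (a - 1) ∧ chCont (chargeB X) a b + 1 ∉ X := by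
  obtain ⟨ha, hb, hprev⟩ := h
  obtain ⟨k, rfl⟩ : ∃ k, a = k + 1 := ⟨a - 1, by omega⟩
  simp only [Nat.add_sub_cancel] at hb ⊢
  have hx : chCont (chargeB X) (k + 1) b = elemSeq X k := by
    have := hX.partB_cast k
    simp only [chCont]; push_cast; omega
  refine ⟨hx, hx ▸ fun hmem => ?_⟩
  rcases k with _ | l
  · exact absurd (hX.le_topB hmem) (by simp [topB, elemSeq])
  · have hgap : elemSeq X (l + 1) + 1 < elemSeq X l := by
      have := hX.partB_cast l
      have := hX.partB_cast (l + 1)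
      rw [show l + 1 + 1 - 2 = l by omega] at hprev
      omega
    have := hX.le_elemSeq_succ hmem hgap
    omega

lemma chCont_removableBox (hX : IsBetaSet X) {a b : ℕ} (h : IsRemovableBox (partB X) a b) :
    chCont (chargeB X) a b + 1 = elemSeq X (a - 1) ∧ chCont (chargeB X) a b ∉ X := by
  obtain ⟨ha, hb, -, hnext⟩ := h
  obtain ⟨k, rfl⟩ : ∃ k, a = k + 1 := ⟨a - 1, by omega⟩
  simp only [Nat.add_sub_cancel] at hb ⊢
  have := hX.partB_cast k
  have := hX.partB_cast (k + 1)
  have hx : chCont (chargeB X) (k + 1) b + 1 = elemSeq X k := by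
    simp only [chCont]; push_cast; omega
  refine ⟨hx, fun hmem => ?_⟩
  have := hX.le_elemSeq_succ (n := k) hmem (by omega)
  simp only [chCont] at this hx
  omega

/-- Addable and removable boxes are told apart by whether their charged content lies in
`X`, and the row is then determined by injectivity of `elemSeq X`. -/
lemma eq_of_chCont_eq (hX : IsBetaSet X) {a b a' b' : ℕ}
    (h : IsAddableBox (partB X) a b ∨ IsRemovableBox (partB X) a b)
    (h' : IsAddableBox (partB X) a' b' ∨ IsRemovableBox (partB X) a' b')
    (hx : chCont (chargeB X) a b = chCont (chargeB X) a' b') : a = a' ∧ b = b' := by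
  have hrow : a - 1 = a' - 1 := by
    refine hX.strictAnti_elemSeq.injective ?_
    rcases h with h | h <;> rcases h' with h' | h'
    · rw [← (hX.chCont_addableBox h).1, ← (hX.chCont_addableBox h').1, hx]
    · exact absurd (hx ▸ (hX.chCont_addableBox h).1 ▸ hX.elemSeq_mem _)
        (hX.chCont_removableBox h').2
    · exact absurd (hx ▸ (hX.chCont_addableBox h').1 ▸ hX.elemSeq_mem _)
        (hX.chCont_removableBox h).2
    · rw [← (hX.chCont_removableBox h).1, ← (hX.chCont_removableBox h').1, hx]
  have ha : 1 ≤ a := by rcases h with h | h <;> exact h.1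
  have ha' : 1 ≤ a' := by rcases h' with h' | h' <;> exact h'.1
  simp only [chCont] at hx
  omega

lemma chCont_mem_Icc (hX : IsBetaSet X) {a b : ℕ}
    (h : IsAddableBox (partB X) a b ∨ IsRemovableBox (partB X) a b) :
    chCont (chargeB X) a b ∈ Set.Icc (botB X - 1) (topB X) := by
  rcases h with h | h
  · obtain ⟨hx, hnext⟩ := hX.chCont_addableBox h
    have := hX.botB_le_of_notMem hnext
    have := hX.le_topB (hx ▸ hX.elemSeq_mem _)
    constructor <;> omega
  · obtain ⟨hx, hnot⟩ := hX.chCont_removableBox h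
    have := hX.botB_le_of_notMem hnot
    have := hX.le_topB (hx ▸ hX.elemSeq_mem _)
    constructor <;> omega

theorem eq_of_dvd_chCont_sub (hX : IsBetaSet X) {d : ℤ}
    (hwidth : topB X - botB X + 1 ≤ d / 2) (t : ℤ) {a b a' b' : ℕ}
    (h : IsAddableBox (partB X) a b ∨ IsRemovableBox (partB X) a b)
    (h' : IsAddableBox (partB X) a' b' ∨ IsRemovableBox (partB X) a' b')
    (hdvd : d ∣ chCont t a b - chCont t a' b') : a = a' ∧ b = b' := by
  refine hX.eq_of_chCont_eq h h' (sub_eq_zero.mp ?_)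
  have hshift : chCont (chargeB X) a b - chCont (chargeB X) a' b' =
      chCont t a b - chCont t a' b' := by
    simp only [chCont]; ring
  obtain ⟨hlo, hhi⟩ := hX.chCont_mem_Icc h
  obtain ⟨hlo', hhi'⟩ := hX.chCont_mem_Icc h'
  exact Int.eq_zero_of_dvd_of_abs_le_ediv_two (hshift ▸ hdvd)
    (abs_sub_le_iff.mpr ⟨by omega, by omega⟩)

end IsBetaSet

namespace IsDSmallWith

variable {d a₁ b₁ a₂ b₂ : ℤ} {X₁ X₂ : Set ℤ}

lemma width_le₁ (h : IsDSmallWith d X₁ X₂ a₁ b₁ a₂ b₂) :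
    topB X₁ - botB X₁ + 1 ≤ d / 2 := by
  have := h.len₁; have := h.bot₁; have := h.top₁; omega

lemma width_le₂ (h : IsDSmallWith d X₁ X₂ a₁ b₁ a₂ b₂) :
    topB X₂ - botB X₂ + 1 ≤ d / 2 := by
  have := h.len₂; have := h.bot₂; have := h.top₂; omega

end IsDSmallWith

theorem stmt8_general (d : ℤ)
    (X₁ X₂ : Set ℤ) (hX₁ : IsBetaSet X₁) (hX₂ : IsBetaSet X₂)
    (hsm : IsDSmall d X₁ X₂) :
    ∀ j : ℕ, (j = 1 ∨ j = 2) → ∀ a b a' b' : ℕ,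
      (IsAddableBox (compPart (partB X₁) (partB X₂) j) a b ∨
        IsRemovableBox (compPart (partB X₁) (partB X₂) j) a b) →
      (IsAddableBox (compPart (partB X₁) (partB X₂) j) a' b' ∨
        IsRemovableBox (compPart (partB X₁) (partB X₂) j) a' b') →
      d ∣ chCont (compT (chargeB X₁) (chargeB X₂ + d / 2) j) a b -
          chCont (compT (chargeB X₁) (chargeB X₂ + d / 2) j) a' b' →
      a = a' ∧ b = b' := by
  obtain ⟨a₁, b₁, a₂, b₂, hsm⟩ := hsm
  rintro j (rfl | rfl) a b a' b'
  · exact hX₁.eq_of_dvd_chCont_sub hsm.width_le₁ _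
  · exact hX₂.eq_of_dvd_chCont_sub hsm.width_le₂ _

/-- For a `d`-small symbol with bipartition `λ¹.λ²` and charge
`(σ₁,σ₂)`, each component `λ^j` has, for each residue `i` modulo `d`, at most one
addable-or-removable box of charged content `≡ i (mod d)` (charged contents w.r.t.
`t = (σ₁, σ₂ + d/2)`); consequently, the bipartition has at most two such boxes in
total, at most one in each component. -/
theorem stmt8 (d : ℤ) (hd : 2 ≤ d) (hdE : Even d)
    (X₁ X₂ : Set ℤ) (hX₁ : IsBetaSet X₁) (hX₂ : IsBetaSet X₂)
    (hsm : IsDSmall d X₁ X₂) :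
    ∀ j : ℕ, (j = 1 ∨ j = 2) → ∀ a b a' b' : ℕ,
      (IsAddableBox (compPart (partB X₁) (partB X₂) j) a b ∨
        IsRemovableBox (compPart (partB X₁) (partB X₂) j) a b) →
      (IsAddableBox (compPart (partB X₁) (partB X₂) j) a' b' ∨
        IsRemovableBox (compPart (partB X₁) (partB X₂) j) a' b') →
      d ∣ chCont (compT (chargeB X₁) (chargeB X₂ + d / 2) j) a b -
          chCont (compT (chargeB X₁) (chargeB X₂ + d / 2) j) a' b' →
      a = a' ∧ b = b' :=
  stmt8_general d X₁ X₂ hX₁ hX₂ hsm
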